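/- Let (X,d) be a metric space and let (x_n)_{n≥1}, (y_n)_{n≥1} be sequences in X both converging to x* ∈ X. Then simultaneously: (i) there exist positive sequences (a_n), (b_n) converging to 0 with d(x_n,x*) ≤ a_n, d(y_n,x*) ≤ b_n for all n and a_n/b_n → 0; and (ii) there exist positive sequences (a'_n), (b'_n) converging to 0 with d(y_n,x*) ≤ a'_n, d(x_n,x*) ≤ b'_n for all n and a'_n/b'_n → 0. Hence each of (x_n) and (y_n) converges faster than the other in the sense of Berinde's Definition 2.7, so the relation 'converges faster' in that sense holds symmetrically between any two sequences with the same limit. -/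

import Mathlib

/-!
Take a positive majorant `c → 0` of both `d(xₙ, x*)` and `d(yₙ, x*)`. Then `a = c` and
`b = c + √c` bound either distance, and `a / b ≤ √c → 0`; swapping the roles of the two
sequences gives the converse relation.
-/

open Filter Topology

/-- Berinde's Definition 2.7: `x` converges to `xstar` faster than `y`. -/
def ConvergesFaster {X : Type*} [MetricSpace X] (x y : ℕ → X) (xstar : X) : Prop :=
  ∃ a b : ℕ → ℝ, (∀ n, 0 < a n) ∧ (∀ n, 0 < b n) ∧
    Tendsto a atTop (𝓝 0) ∧ Tendsto b atTop (𝓝 0) ∧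
    (∀ n, dist (x n) xstar ≤ a n) ∧ (∀ n, dist (y n) xstar ≤ b n) ∧
    Tendsto (fun n => a n / b n) atTop (𝓝 0)

lemma exists_pos_ge_tendsto_zero {r : ℕ → ℝ} (hr : Tendsto r atTop (𝓝 0)) :
    ∃ c : ℕ → ℝ, (∀ n, 0 < c n) ∧ (∀ n, r n ≤ c n) ∧ Tendsto c atTop (𝓝 0) := by
  refine ⟨fun n => |r n| + (1 / 2) ^ n, fun n => by positivity,
    fun n => (le_abs_self _).trans (le_add_of_nonneg_right (by positivity)), ?_⟩
  simpa using hr.abs.add (tendsto_pow_atTop_nhds_zero_of_lt_one (r := (1 / 2 : ℝ))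
    (by norm_num) (by norm_num))

lemma div_add_sqrt_le_sqrt {t : ℝ} (ht : 0 < t) : t / (t + √t) ≤ √t := by
  rw [div_le_iff₀ (by positivity)]
  nlinarith [Real.mul_self_sqrt ht.le, Real.sqrt_nonneg t]

lemma tendsto_div_add_sqrt_zero {ι : Type*} {l : Filter ι} {c : ι → ℝ} (hc : ∀ i, 0 < c i)
    (hc0 : Tendsto c l (𝓝 0)) : Tendsto (fun i => c i / (c i + √(c i))) l (𝓝 0) := by
  have hsqrt : Tendsto (fun i => √(c i)) l (𝓝 0) := by
    simpa using hc0.sqrt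
  refine squeeze_zero (fun i => ?_) (fun i => div_add_sqrt_le_sqrt (hc i)) hsqrt
  exact div_nonneg (hc i).le (add_nonneg (hc i).le (Real.sqrt_nonneg _))

lemma convergesFaster_of_tendsto {X : Type*} [MetricSpace X] {x y : ℕ → X} {xstar : X}
    (hx : Tendsto x atTop (𝓝 xstar)) (hy : Tendsto y atTop (𝓝 xstar)) :
    ConvergesFaster x y xstar := by
  have hdist : Tendsto (fun n => max (dist (x n) xstar) (dist (y n) xstar)) atTop (𝓝 0) := by
    simpa using (tendsto_iff_dist_tendsto_zero.1 hx).max (tendsto_iff_dist_tendsto_zero.1 hy)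
  obtain ⟨c, hc, hdist_le, hc0⟩ := exists_pos_ge_tendsto_zero hdist
  have hc_le : ∀ n, c n ≤ c n + √(c n) := fun n => le_add_of_nonneg_right (Real.sqrt_nonneg _)
  refine ⟨c, fun n => c n + √(c n), hc, fun n => (hc n).trans_le (hc_le n), hc0,
    by simpa using hc0.add hc0.sqrt, fun n => (le_max_left _ _).trans (hdist_le n),
    fun n => ((le_max_right _ _).trans (hdist_le n)).trans (hc_le n),
    tendsto_div_add_sqrt_zero hc hc0⟩

/-- Each of two sequences with the same limit converges "faster" than the other in
the sense of Berinde's Definition 2.7: the relation holds symmetrically. -/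
theorem berinde_faster_symmetric {X : Type*} [MetricSpace X] (x y : ℕ → X) (xstar : X)
    (hx : Tendsto x atTop (𝓝 xstar)) (hy : Tendsto y atTop (𝓝 xstar)) :
    (∃ a b : ℕ → ℝ, (∀ n, 0 < a n) ∧ (∀ n, 0 < b n) ∧
      Tendsto a atTop (𝓝 0) ∧ Tendsto b atTop (𝓝 0) ∧
      (∀ n, dist (x n) xstar ≤ a n) ∧ (∀ n, dist (y n) xstar ≤ b n) ∧
      Tendsto (fun n => a n / b n) atTop (𝓝 0)) ∧
    (∃ a' b' : ℕ → ℝ, (∀ n, 0 < a' n) ∧ (∀ n, 0 < b' n) ∧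
      Tendsto a' atTop (𝓝 0) ∧ Tendsto b' atTop (𝓝 0) ∧
      (∀ n, dist (y n) xstar ≤ a' n) ∧ (∀ n, dist (x n) xstar ≤ b' n) ∧
      Tendsto (fun n => a' n / b' n) atTop (𝓝 0)) :=
  ⟨convergesFaster_of_tendsto hx hy, convergesFaster_of_tendsto hy hx⟩
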